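/- Let G be a finite group generated by elements x, y, z with xyz = 1, and let d ≥ 1. Then there is a normal subgroup N of G such that G/N is cyclic of order dividing d, and N is generated by x^d, y^d together with d conjugates of z whose product (together with x^d and y^d in an appropriate order) is 1. In particular, N is generated by x^d, y^d and d conjugates of z. -/

import Mathlib

/-!
Let `N` be generated by `y^d` and the conjugates `y^k z y^(-k)`, `k ∈ ℤ`. Conjugation by `y`
permutes these generators and `z ∈ N`, so `N` is normal in `G = ⟨y, z⟩`, and `G/N` is generated
by the image of `y`, whose `d`-th power is trivial. Since `y^(-k) z y^k = y^(-k-1) x⁻¹ y^k`, the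
product of the conjugates `y^(-k) z y^k` for `k = d-1, …, 0` telescopes to `y^(-d) x^(-d)`. As
`y^d ∈ N`, every `y^k z y^(-k)` is conjugate by a power of `y^d` to one of these `d`, so they
generate `N` together with `x^d` and `y^d`.
-/

open Subgroup

namespace TranslationPrinciple

variable {G : Type*} [Group G]

theorem closure_pair_eq_top_of_mul_mul_eq_one {x y z : G}
    (hgen : closure {x, y, z} = ⊤) (hprod : x * y * z = 1) : closure {y, z} = ⊤ := by
  have hx : x = (y * z)⁻¹ := by rw [eq_inv_iff_mul_eq_one, ← mul_assoc, hprod]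
  rw [eq_top_iff, ← hgen, closure_le]
  rintro g (rfl | rfl | rfl)
  · exact hx ▸ inv_mem (mul_mem (subset_closure (by simp)) (subset_closure (by simp)))
  · exact subset_closure (by simp)
  · exact subset_closure (by simp)

theorem normal_of_mem_normalizer_of_mem {H : Subgroup G} {y z : G} (hyz : closure {y, z} = ⊤)
    (hy : y ∈ normalizer (H : Set G)) (hz : z ∈ H) : H.Normal := by
  rw [← normalizer_eq_top_iff, eq_top_iff, ← hyz, closure_le]
  rintro g (rfl | rfl)
  · exact hy
  · exact le_normalizer hz

theorem zpowers_mk_eq_top {N : Subgroup G} [N.Normal] {y z : G} (hyz : closure {y, z} = ⊤)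
    (hz : z ∈ N) : zpowers (y : G ⧸ N) = ⊤ := by
  calc zpowers (y : G ⧸ N) = closure {(y : G ⧸ N), (z : G ⧸ N)} := by
        rw [(QuotientGroup.eq_one_iff z).2 hz, Set.pair_comm, closure_insert_one,
          zpowers_eq_closure]
    _ = (closure {y, z}).map (QuotientGroup.mk' N) := by
        rw [MonoidHom.map_closure, Set.image_pair]; rfl
    _ = ⊤ := by rw [hyz, map_top_of_surjective _ (QuotientGroup.mk'_surjective N)]

theorem isCyclic_and_card_dvd_of_zpowers_eq_top {Q : Type*} [Group Q] {g : Q} {d : ℕ}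
    (hg : zpowers g = ⊤) (hgd : g ^ d = 1) : IsCyclic Q ∧ Nat.card Q ∣ d :=
  ⟨isCyclic_iff_exists_zpowers_eq_top.2 ⟨g, hg⟩,
    orderOf_eq_card_of_zpowers_eq_top hg ▸ orderOf_dvd_of_pow_eq_one hgd⟩

def zpowConjugates (y z : G) : Set G := Set.range fun k : ℤ => y ^ k * z * (y ^ k)⁻¹

def translatedConjugates (y z : G) (d : ℕ) : Fin d → G :=
  fun i => y ^ ((i : ℤ) + 1 - d) * z * (y ^ ((i : ℤ) + 1 - d))⁻¹

theorem isConj_translatedConjugates (y z : G) (d : ℕ) (i : Fin d) :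
    IsConj z (translatedConjugates y z d i) :=
  isConj_iff.2 ⟨_, rfl⟩

theorem prod_translatedConjugates {x y z : G} (hprod : x * y * z = 1) (n : ℕ) :
    (List.ofFn (translatedConjugates y z n)).prod = (y ^ n)⁻¹ * (x ^ n)⁻¹ := by
  have hz : z = y⁻¹ * x⁻¹ := by
    rw [← mul_inv_rev]; exact eq_inv_of_mul_eq_one_right hprod
  induction n with
  | zero => simp
  | succ n ih =>
    have htail : (fun i : Fin n => translatedConjugates y z (n + 1) i.succ) =
        translatedConjugates y z n := by
      funext i
      simp only [translatedConjugates, Fin.val_succ]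
      push_cast
      ring_nf
    rw [List.ofFn_succ, List.prod_cons, htail, ih]
    simp only [translatedConjugates, Fin.val_zero]
    rw [hz]
    group

theorem y_mem_normalizer_closure (y z : G) (d : ℕ) :
    y ∈ normalizer (closure ({y ^ d} ∪ zpowConjugates y z) : Set G) := by
  refine le_normalizer_closure_iff.2 ?_ (mem_zpowers y)
  rintro _ ⟨m, rfl⟩ g (rfl | ⟨k, rfl⟩)
  · exact subset_closure (Or.inl (Set.mem_singleton_iff.2 (by group)))
  · exact subset_closure (Or.inr ⟨m + k, by simp only; group⟩)

theorem zpowConjugates_subset_of_translatedConjugates_mem {H : Subgroup G} {y z : G} {d : ℕ}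
    (hd : 0 < d) (hyd : y ^ d ∈ H) (hc : ∀ i, translatedConjugates y z d i ∈ H) :
    zpowConjugates y z ⊆ H := by
  rintro _ ⟨k, rfl⟩
  obtain ⟨i, q, rfl⟩ : ∃ (i : Fin d) (q : ℤ), k = (i : ℤ) + 1 - d + d * q := by
    have hr0 := Int.emod_nonneg (k - 1) (by omega : (d : ℤ) ≠ 0)
    have hrd := Int.emod_lt_of_pos (k - 1) (by omega : (0 : ℤ) < d)
    refine ⟨⟨((k - 1) % d).toNat, by omega⟩, (k - 1) / d + 1, ?_⟩
    have := Int.emod_add_mul_ediv (k - 1) d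
    simp only [Int.toNat_of_nonneg hr0]
    linarith
  have hconj : y ^ ((i : ℤ) + 1 - d + d * q) * z * (y ^ ((i : ℤ) + 1 - d + d * q))⁻¹ =
      (y ^ d) ^ q * translatedConjugates y z d i * ((y ^ d) ^ q)⁻¹ := by
    rw [translatedConjugates, zpow_add, ← zpow_natCast, ← zpow_mul]
    group
  dsimp only
  rw [SetLike.mem_coe, hconj]
  exact mul_mem (mul_mem (zpow_mem hyd _) (hc i)) (inv_mem (zpow_mem hyd _))

theorem closure_translation_eq {x y z : G} (hprod : x * y * z = 1) {d : ℕ} (hd : 0 < d) :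
    closure ({x ^ d, y ^ d} ∪ Set.range (translatedConjugates y z d)) =
      closure ({y ^ d} ∪ zpowConjugates y z) := by
  have hyd : y ^ d ∈ closure ({y ^ d} ∪ zpowConjugates y z) := subset_closure (Or.inl rfl)
  have hc : ∀ i, translatedConjugates y z d i ∈ closure ({y ^ d} ∪ zpowConjugates y z) :=
    fun i => subset_closure (Or.inr ⟨_, rfl⟩)
  have hx : x ^ d = (List.ofFn (translatedConjugates y z d)).prod⁻¹ * (y ^ d)⁻¹ := by
    rw [prod_translatedConjugates hprod]; group
  apply le_antisymm <;> rw [closure_le]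
  · rintro _ ((rfl | rfl) | ⟨i, rfl⟩)
    · rw [SetLike.mem_coe, hx]
      refine mul_mem (inv_mem (list_prod_mem ?_)) (inv_mem hyd)
      simpa [List.mem_ofFn] using hc
    · exact hyd
    · exact hc i
  · refine Set.union_subset (Set.singleton_subset_iff.2 (subset_closure (by simp))) ?_
    exact zpowConjugates_subset_of_translatedConjugates_mem hd (subset_closure (by simp))
      fun i => subset_closure (Or.inr ⟨i, rfl⟩)

end TranslationPrinciple

open TranslationPrinciple

theorem stmt_3_general (G : Type*) [Group G] (x y z : G)
    (hgen : Subgroup.closure {x, y, z} = ⊤) (hprod : x * y * z = 1)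
    (d : ℕ) (hd : 1 ≤ d) :
    ∃ N : Subgroup G, N.Normal ∧
      (∀ hN : N.Normal, IsCyclic (G ⧸ N) ∧ Nat.card (G ⧸ N) ∣ d) ∧
      ∃ c : Fin d → G, (∀ i, IsConj z (c i)) ∧
        x ^ d * y ^ d * (List.ofFn c).prod = 1 ∧
        Subgroup.closure ({x ^ d, y ^ d} ∪ Set.range c) = N := by
  have hyz := closure_pair_eq_top_of_mul_mul_eq_one hgen hprod
  set N := closure ({y ^ d} ∪ zpowConjugates y z)
  have hzN : z ∈ N := subset_closure (Or.inr ⟨0, by simp⟩)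
  have hydN : y ^ d ∈ N := subset_closure (Or.inl rfl)
  refine ⟨N, normal_of_mem_normalizer_of_mem hyz (y_mem_normalizer_closure y z d) hzN,
    fun _ => isCyclic_and_card_dvd_of_zpowers_eq_top (zpowers_mk_eq_top hyz hzN) ?_,
    translatedConjugates y z d, isConj_translatedConjugates y z d, ?_,
    closure_translation_eq hprod hd⟩
  · rw [← QuotientGroup.mk_pow, QuotientGroup.eq_one_iff]
    exact hydN
  · rw [prod_translatedConjugates hprod]
    group

/-- Translation principle: if a finite group `G` is generated by `x, y, z` with
`x * y * z = 1` and `d ≥ 1`, then there is a normal subgroup `N` with `G/N`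
cyclic of order dividing `d`, such that `N` is generated by `x^d`, `y^d` and
`d` conjugates of `z` whose product together with `x^d`, `y^d` is `1`. -/
theorem stmt_3 (G : Type*) [Group G] [Finite G] (x y z : G)
    (hgen : Subgroup.closure {x, y, z} = ⊤) (hprod : x * y * z = 1)
    (d : ℕ) (hd : 1 ≤ d) :
    ∃ N : Subgroup G, N.Normal ∧
      (∀ hN : N.Normal, IsCyclic (G ⧸ N) ∧ Nat.card (G ⧸ N) ∣ d) ∧
      ∃ c : Fin d → G, (∀ i, IsConj z (c i)) ∧
        x ^ d * y ^ d * (List.ofFn c).prod = 1 ∧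
        Subgroup.closure ({x ^ d, y ^ d} ∪ Set.range c) = N :=
  stmt_3_general G x y z hgen hprod d hd
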